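/- For every integer k ∈ ℤ, the operator γ̂ satisfies, in R′: γ̂( φ(−x/t)^{-1} · φ(−qΛ/x)^{-1} · x^k ) = φ(qΛ/t)^{-1} · φ(q^{1+k} x/t) · φ(q^{1−k} Λ/x) · q^{k(k+1)/2} x^k. -/

import Mathlib

/-!
STATEMENT 7.  The commutation formula (eq. (56) of the paper) for `γ̂` against
quantum dilogarithms: for every `k ∈ ℤ`,
`γ̂(φ(−x/t)⁻¹ φ(−qΛ/x)⁻¹ x^k) = φ(qΛ/t)⁻¹ φ(q^{1+k}x/t) φ(q^{1−k}Λ/x) q^{k(k+1)/2} x^k`.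
-/
noncomputable section

open PowerSeries Finset

/-- `F' = ℚ(q,t)`. -/
abbrev F2 : Type := FractionRing (MvPolynomial (Fin 2) ℚ)

def q : F2 := algebraMap (MvPolynomial (Fin 2) ℚ) F2 (MvPolynomial.X 0)
def t : F2 := algebraMap (MvPolynomial (Fin 2) ℚ) F2 (MvPolynomial.X 1)

/-- `F'((x))`. -/
abbrev LS : Type := LaurentSeries F2
/-- `R' = F'((x))[[Λ]]`. -/
abbrev R2 : Type := PowerSeries LS

/-- The operator on Laurent series multiplying the coefficient of `x^n` by `c n`. -/
def diagX (c : ℤ → F2) (f : LS) : LS where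
  coeff n := c n * f.coeff n
  isPWO_support' := f.isPWO_support'.mono (by
    intro n hn
    simp only [Function.mem_support, ne_eq] at hn ⊢
    exact fun h => hn (by rw [h, mul_zero]))

/-- The continuous `F'`-linear operator on `R'` multiplying the coefficient of
`Λ^m x^n` by `c n`. -/
def onX (c : ℤ → F2) (f : R2) : R2 := PowerSeries.mk fun m => diagX c (PowerSeries.coeff m f)

/-- `γ̂`, with `γ̂(Λ^m x^n) = q^{n(n+1)/2} Λ^m x^n`. -/
def gammaHat : R2 → R2 := onX fun n => q ^ (n * (n + 1) / 2)

/-- q-Pochhammer symbol `(z)_n = ∏_{i<n} (1 - qⁱ z)`. -/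
def poch (z : F2) (n : ℕ) : F2 := ∏ i ∈ Finset.range n, (1 - q ^ i * z)

/-- `q^k` for `k : ℤ`. -/
def qz (k : ℤ) : F2 := q ^ k

/-- Coefficients of the Euler expansion `φ(u) = ∏_{i≥0}(1-qⁱu) = Σ_n phiC n · uⁿ`. -/
def phiC (n : ℕ) : F2 := (-1) ^ n * q ^ (n * (n - 1) / 2) / poch q n

/-- `φ(a·x) = ∏_{i≥0}(1 - qⁱ a x) ∈ F'((x)) ⊆ R'`. -/
def phiX (a : F2) : R2 :=
  PowerSeries.C (HahnSeries.ofPowerSeries ℤ F2 (PowerSeries.mk fun n => phiC n * a ^ n))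

/-- `φ(a·Λ) = ∏_{i≥0}(1 - qⁱ a Λ) ∈ R'` for `a ∈ F'((x))`; taking `a` a scalar
multiple of `x⁻¹` covers arguments proportional to `Λ/x`. -/
def phiL (a : LS) : R2 := PowerSeries.mk fun m => HahnSeries.C (phiC m) * a ^ m

/-- The monomial `c·x^k ∈ F'((x))`. -/
def mono (k : ℤ) (c : F2) : LS := HahnSeries.single k c

/-- The monomial `x^k ∈ R'`, `k ∈ ℤ`. -/
def xpow (k : ℤ) : R2 := PowerSeries.C (HahnSeries.single k (1 : F2))

/-- Scalars embedded in `R'`. -/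
def CF (a : F2) : R2 := PowerSeries.C (HahnSeries.C a)
/-! ### Auxiliary scalar lemmas -/

namespace Stmt7

lemma alg_inj : Function.Injective (algebraMap (MvPolynomial (Fin 2) ℚ) F2) :=
  IsFractionRing.injective _ _

lemma hq0 : q ≠ 0 := by
  intro h
  have h2 : (MvPolynomial.X 0 : MvPolynomial (Fin 2) ℚ) = 0 := alg_inj (by simpa [q] using h)
  exact MvPolynomial.X_ne_zero 0 h2

lemma ht0 : t ≠ 0 := by
  intro h
  have h2 : (MvPolynomial.X 1 : MvPolynomial (Fin 2) ℚ) = 0 := alg_inj (by simpa [t] using h)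
  exact MvPolynomial.X_ne_zero 1 h2

lemma hq_pow_ne_one (i : ℕ) : q ^ (i + 1) ≠ 1 := by
  intro h
  have h2 : (MvPolynomial.X 0 : MvPolynomial (Fin 2) ℚ) ^ (i + 1) = 1 := by
    apply alg_inj
    rw [map_pow, map_one]
    exact h
  have h3 := congrArg (MvPolynomial.eval (fun _ : Fin 2 => (2 : ℚ))) h2
  simp only [map_pow, MvPolynomial.eval_X, map_one] at h3
  have h4 : (1 : ℚ) < 2 ^ (i + 1) := one_lt_pow₀ (by norm_num) (Nat.succ_ne_zero i)
  rw [h3] at h4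
  exact lt_irrefl _ h4

lemma hqz_ne_one {b : ℤ} (hb : b ≠ 0) : q ^ b ≠ 1 := by
  have key : ∀ c : ℤ, 0 < c → q ^ c ≠ 1 := by
    intro c hc h
    have hn : c.toNat = (c.toNat - 1) + 1 := by omega
    have : q ^ (c.toNat) = 1 := by
      rw [← zpow_natCast, Int.toNat_of_nonneg hc.le]; exact h
    rw [hn] at this
    exact hq_pow_ne_one _ this
  rcases hb.lt_or_gt with h | h
  · intro h1
    have h2 : q ^ (-b) = 1 := by rw [zpow_neg, h1, inv_one]
    exact key (-b) (by omega) h2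
  · exact key b h

lemma poch_ne_zero (n : ℕ) : poch q n ≠ 0 := by
  unfold poch
  rw [Finset.prod_ne_zero_iff]
  intro i _ h
  exact hq_pow_ne_one i (by rw [pow_succ]; exact (sub_eq_zero.mp h).symm)

/-- extended reciprocal Pochhammer -/
def dz (b : ℤ) : F2 := if 0 ≤ b then (poch q b.toNat)⁻¹ else 0

lemma dz_coe (a : ℕ) : dz (a : ℤ) = (poch q a)⁻¹ := by simp [dz]

lemma dz_neg {b : ℤ} (h : b < 0) : dz b = 0 := by simp [dz, not_le.mpr h]

lemma dz_zero : dz 0 = 1 := by simp [dz, poch]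

lemma dz_ne_zero {b : ℤ} (h : 0 ≤ b) : dz b ≠ 0 := by
  simp only [dz, if_pos h]
  exact inv_ne_zero (poch_ne_zero _)

lemma dz_rel (b : ℤ) : (1 - q ^ b) * dz b = dz (b - 1) := by
  rcases lt_trichotomy b 0 with h | h | h
  · rw [dz_neg h, dz_neg (by omega), mul_zero]
  · subst h
    rw [show (0:ℤ) - 1 = -1 by ring, zpow_zero, sub_self, zero_mul]
    exact (dz_neg (show (-1:ℤ) < 0 by norm_num)).symm
  · have hn : b = ((b.toNat - 1 : ℕ) : ℤ) + 1 := by omega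
    generalize hm : b.toNat - 1 = m at hn
    subst hn
    rw [show ((m : ℤ) + 1 - 1) = (m : ℤ) by ring, dz_coe,
      show ((m : ℤ) + 1) = (((m + 1 : ℕ) : ℤ)) by push_cast; ring, dz_coe, zpow_natCast]
    rw [poch, Finset.prod_range_succ, ← poch]
    have h1 : q ^ m * q = q ^ (m + 1) := by rw [pow_succ]
    rw [h1, mul_inv]
    have h2 : (1 - q ^ (m + 1)) ≠ 0 := by
      intro h0
      exact hq_pow_ne_one m (sub_eq_zero.mp h0).symm
    field_simp

lemma hn0 : (-1 : F2) ≠ 0 := by norm_num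

/-- `(-1)^b q^{b(b+1)/2} / (q;q)_b`, extended by `0` to negative `b`. -/
def Gz (b : ℤ) : F2 := (-1 : F2) ^ b * q ^ (b * (b + 1) / 2) * dz b

/-- `q^z / (q;q)_z`, extended by `0`. -/
def Azz (z : ℤ) : F2 := q ^ z * dz z

lemma Gz_zero : Gz 0 = 1 := by simp [Gz, dz_zero]

lemma Gz_neg {b : ℤ} (h : b < 0) : Gz b = 0 := by simp [Gz, dz_neg h]

lemma Gz_rel (b : ℤ) : (1 - q ^ b) * Gz b = -(q ^ b * Gz (b - 1)) := by
  unfold Gz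
  obtain ⟨c, hc⟩ := Int.even_mul_succ_self (b - 1)
  rw [sub_add_cancel] at hc
  have h2 : b * (b + 1) = c + c + 2 * b := by linear_combination hc
  rw [show b - 1 + 1 = b by ring, h2, hc]
  have e : (c + c + 2 * b) / 2 = b + (c + c) / 2 := by omega
  rw [e, zpow_add₀ hq0]
  have s : (-1 : F2) ^ (b - 1) = -(-1 : F2) ^ b := by
    rw [zpow_sub₀ hn0, zpow_one, div_neg, div_one]
  rw [s]
  linear_combination ((-1 : F2) ^ b * q ^ b * q ^ ((c + c) / 2)) * dz_rel b

lemma qzpow_succ (a : ℤ) : q ^ (a + 1) = q ^ a * q := by rw [zpow_add₀ hq0, zpow_one]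

lemma qzpow_pred (a : ℤ) : q ^ a = q ^ (a - 1) * q := by
  rw [← qzpow_succ (a - 1), sub_add_cancel]

/-- the right-hand side single sum -/
def rr (m : ℕ) (ν : ℤ) : F2 :=
  ∑ j ∈ Finset.range (m + 1), Azz ((m : ℤ) - j) * Gz (j : ℤ) * Gz (ν + j)

/-- the left-hand side closed form -/
def ll (m : ℕ) (ν : ℤ) : F2 :=
  (-1 : F2) ^ ν * q ^ (ν * (ν + 1) / 2) * q ^ (m : ℤ) * dz (m : ℤ) * dz (ν + m)

lemma rec_r (m : ℕ) (ν : ℤ) :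
    (1 - q ^ ((m : ℤ) + ν + 1)) * rr m (ν + 1) + q ^ (ν + 1) * rr m ν = 0 := by
  classical
  set D : ℕ → F2 := fun j =>
    q ^ (ν + 1) * (Azz ((m : ℤ) - j) * Gz (j : ℤ) * (1 - q ^ (j : ℤ)) * Gz (ν + j)) with hD
  have key : ∀ j ∈ Finset.range (m + 1),
      (1 - q ^ ((m : ℤ) + ν + 1)) * (Azz ((m : ℤ) - j) * Gz (j : ℤ) * Gz (ν + 1 + j))
        + q ^ (ν + 1) * (Azz ((m : ℤ) - j) * Gz (j : ℤ) * Gz (ν + j)) = D j - D (j + 1) := by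
    intro j _
    have h1 : (1 - q ^ ν * q ^ (j : ℤ) * q) * Gz (ν + j + 1) + q ^ ν * q ^ (j : ℤ) * q * Gz (ν + j) = 0 := by
      have h := Gz_rel (ν + j + 1)
      rw [show ν + (j : ℤ) + 1 - 1 = ν + j by ring] at h
      rw [show q ^ (ν + (j : ℤ) + 1) = q ^ ν * q ^ (j : ℤ) * q by
        rw [zpow_add₀ hq0, zpow_add₀ hq0, zpow_one]] at h
      linear_combination h
    have h2 : (1 - q ^ (j : ℤ) * q) * Gz ((j : ℤ) + 1) + q ^ (j : ℤ) * q * Gz (j : ℤ) = 0 := by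
      have h := Gz_rel ((j : ℤ) + 1)
      rw [show (j : ℤ) + 1 - 1 = (j : ℤ) by ring] at h
      rw [show q ^ ((j : ℤ) + 1) = q ^ (j : ℤ) * q by rw [zpow_add₀ hq0, zpow_one]] at h
      linear_combination h
    have h3 : dz ((m : ℤ) - j - 1) = (1 - q ^ ((m : ℤ) - j - 1) * q) * dz ((m : ℤ) - j) := by
      have h := dz_rel ((m : ℤ) - j)
      rw [qzpow_pred ((m : ℤ) - j)] at h
      exact h.symm
    simp only [hD, Azz]
    push_cast at h1 h2 h3 ⊢
    rw [show (m : ℤ) - ((j : ℤ) + 1) = (m : ℤ) - j - 1 by ring]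
    rw [h3]
    rw [show ν + 1 + (j : ℤ) = ν + (j : ℤ) + 1 by ring]
    rw [show q ^ ((m : ℤ) + ν + 1) = q ^ ((m : ℤ) - j - 1) * q * q ^ (j : ℤ) * q ^ ν * q by
      rw [show (m : ℤ) + ν + 1 = ((m : ℤ) - j - 1) + 1 + (j : ℤ) + ν + 1 by ring]
      simp only [zpow_add₀ hq0, zpow_one]]
    rw [qzpow_pred ((m : ℤ) - j)]
    rw [show q ^ (ν + 1) = q ^ ν * q from qzpow_succ ν]
    rw [show q ^ ((j : ℤ) + 1) = q ^ (j : ℤ) * q from qzpow_succ (j : ℤ)]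
    rw [show ν + ((j:ℤ) + 1) = ν + (j:ℤ) + 1 by ring]
    set A := q ^ ((m : ℤ) - (j:ℤ) - 1) with hA
    set dd := dz ((m : ℤ) - (j:ℤ)) with hdd
    set U := Gz ((j:ℤ)) with hU
    set V := Gz ((j:ℤ) + 1) with hV
    set G0 := Gz (ν + (j:ℤ)) with hG0
    set G1 := Gz (ν + (j:ℤ) + 1) with hG1
    set Qn := q ^ ν with hQn
    set Qj := q ^ ((j:ℤ)) with hQj
    linear_combination (q ^ ((m : ℤ) - j - 1) * q * dz ((m : ℤ) - j) * Gz (j : ℤ)) * h1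
      + (q ^ ν * q * q ^ ((m : ℤ) - j - 1) * (1 - q ^ ((m : ℤ) - j - 1) * q) * dz ((m : ℤ) - j) * Gz (ν + (j : ℤ) + 1)) * h2
  have sum0 : ∑ j ∈ Finset.range (m + 1), (D j - D (j + 1)) = D 0 - D (m + 1) :=
    Finset.sum_range_sub' D (m + 1)
  have hD0 : D 0 = 0 := by simp [hD]
  have hDm : D (m + 1) = 0 := by
    have : ((m : ℤ)) - ((m : ℕ) + 1 : ℕ) = -1 := by push_cast; ring
    simp only [hD, this, Azz]
    rw [dz_neg (show (-1 : ℤ) < 0 by norm_num)]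
    ring
  unfold rr
  rw [Finset.mul_sum, Finset.mul_sum, ← Finset.sum_add_distrib]
  rw [Finset.sum_congr rfl key, sum0, hD0, hDm, sub_zero]

lemma one_sub_qpow_ne {b : ℤ} (hb : b ≠ 0) : 1 - q ^ b ≠ 0 :=
  fun h => hqz_ne_one hb (sub_eq_zero.mp h).symm

lemma rec_l (m : ℕ) (ν : ℤ) :
    (1 - q ^ ((m : ℤ) + ν + 1)) * ll m (ν + 1) + q ^ (ν + 1) * ll m ν = 0 := by
  unfold ll
  obtain ⟨c, hc⟩ := Int.even_mul_succ_self ν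
  have h2 : (ν + 1) * (ν + 1 + 1) = c + c + 2 * (ν + 1) := by linear_combination hc
  rw [h2, hc]
  have e : (c + c + 2 * (ν + 1)) / 2 = (c + c) / 2 + (ν + 1) := by omega
  rw [e, show q ^ ((c + c) / 2 + (ν + 1)) = q ^ ((c + c) / 2) * q ^ (ν + 1) from zpow_add₀ hq0 _ _]
  have s : (-1 : F2) ^ (ν + 1) = -(-1 : F2) ^ ν := by
    rw [zpow_add₀ hn0, zpow_one]; ring
  rw [s]
  have hdz := dz_rel (ν + 1 + (m : ℤ))
  rw [show ν + 1 + (m : ℤ) - 1 = ν + (m : ℤ) by ring] at hdz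
  rw [show (m : ℤ) + ν + 1 = ν + 1 + (m : ℤ) by ring]
  linear_combination (-((-1 : F2) ^ ν * q ^ ((c + c) / 2) * q ^ (ν + 1) * q ^ (m : ℤ) * dz (m : ℤ))) * hdz

lemma V (m : ℕ) (ν : ℤ) : ll m ν = rr m ν := by
  rcases lt_or_ge (ν + m) 0 with h | h
  · rw [ll, dz_neg h, mul_zero, rr]
    rw [Finset.sum_eq_zero]
    intro j hj
    have hj' : (j : ℤ) ≤ m := by
      simpa using Int.ofNat_le.mpr (Nat.lt_succ_iff.mp (Finset.mem_range.mp hj))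
    rw [Gz_neg (show ν + (j : ℤ) < 0 by omega), mul_zero]
  · suffices H : ∀ c : ℕ, ∀ ν : ℤ, ν + m = c → ll m ν = rr m ν by
      refine H (ν + m).toNat ν ?_
      rw [Int.toNat_of_nonneg h]
    intro c
    induction c with
    | zero =>
      intro ν hν
      have hν' : ν = -(m : ℤ) := by omega
      subst hν'
      rw [rr, Finset.sum_eq_single_of_mem m (Finset.self_mem_range_succ m)]
      · rw [show (m : ℤ) - m = 0 by ring, show -(m : ℤ) + m = 0 by ring, Gz_zero, mul_one]
        have hA : Azz 0 = 1 := by rw [Azz, zpow_zero, dz_zero, one_mul]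
        rw [hA, one_mul, ll, show -(m : ℤ) + m = 0 by ring, dz_zero, mul_one, Gz]
        have hsq : ((-1 : F2) ^ ((m : ℤ))) * ((-1 : F2) ^ ((m : ℤ))) = 1 := by
          rw [← zpow_add₀ hn0, show (m : ℤ) + m = 2 * m by ring, zpow_mul]
          norm_num
        have hinv : (-1 : F2) ^ (-(m : ℤ)) = (-1 : F2) ^ ((m : ℤ)) := by
          rw [zpow_neg, inv_eq_of_mul_eq_one_right hsq]
        rw [hinv]
        obtain ⟨c, hc⟩ := Int.even_mul_succ_self (m : ℤ)
        have h2 : (-(m : ℤ)) * (-(m : ℤ)) + -(m:ℤ) = c + c - 2 * m := by linear_combination hc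
        have h2' : (-(m : ℤ)) * (-(m : ℤ) + 1) = c + c - 2 * m := by linear_combination h2
        rw [h2', hc]
        have e : (c + c - 2 * (m : ℤ)) / 2 = (c + c) / 2 - m := by omega
        rw [e, zpow_sub₀ hq0]
        have hmul : q ^ ((c + c) / 2 - (m : ℤ)) * q ^ (m : ℤ) = q ^ ((c + c) / 2) := by
          rw [← zpow_add₀ hq0]; congr 1; ring
        rw [zpow_sub₀ hq0] at hmul
        linear_combination ((-1 : F2) ^ ((m : ℤ)) * dz ((m : ℤ))) * hmul
      · intro b hb hbm
        have hb0 : b < m := Nat.lt_of_le_of_ne (Nat.lt_succ_iff.mp (Finset.mem_range.mp hb)) hbm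
        have hb' : (b : ℤ) < m := by exact_mod_cast hb0
        rw [Gz_neg (show -(m : ℤ) + b < 0 by omega), mul_zero]
    | succ c ih =>
      intro ν hν
      have h1 := ih (ν - 1) (by omega)
      have h2 := rec_r m (ν - 1)
      have h3 := rec_l m (ν - 1)
      rw [sub_add_cancel] at h2 h3
      have hne : (1 - q ^ ((m : ℤ) + (ν - 1) + 1)) ≠ 0 :=
        one_sub_qpow_ne (by omega)
      apply mul_left_cancel₀ hne
      calc (1 - q ^ ((m : ℤ) + (ν - 1) + 1)) * ll m ν
          = -(q ^ ν * ll m (ν - 1)) := by linear_combination h3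
        _ = -(q ^ ν * rr m (ν - 1)) := by rw [h1]
        _ = (1 - q ^ ((m : ℤ) + (ν - 1) + 1)) * rr m ν := by linear_combination -h2

lemma tri_cast (i : ℕ) : ((i * (i - 1) / 2 : ℕ) : ℤ) = (i : ℤ) * ((i : ℤ) - 1) / 2 := by
  cases i with
  | zero => simp
  | succ j =>
    obtain ⟨c, hc⟩ := Nat.even_mul_succ_self j
    have hc2 : (j + 1) * (j + 1 - 1) = c + c := by rw [Nat.succ_sub_one, Nat.mul_comm]; exact hc
    rw [hc2]
    have hcz : ((j : ℤ)) * ((j : ℤ) + 1) = (c : ℤ) + c := by exact_mod_cast hc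
    have hc3 : ((j + 1 : ℕ) : ℤ) * (((j + 1 : ℕ) : ℤ) - 1) = (c : ℤ) + c := by
      push_cast; linear_combination hcz
    rw [hc3]
    omega

lemma phiC_eq (i : ℕ) : phiC i = (-1 : F2) ^ (i : ℤ) * q ^ ((i : ℤ) * ((i : ℤ) - 1) / 2) * dz i := by
  rw [phiC, div_eq_mul_inv, ← dz_coe, zpow_natCast, ← tri_cast, zpow_natCast]

lemma euler_conv (n : ℕ) :
    ∑ i ∈ Finset.range (n + 1), phiC i * (poch q (n - i))⁻¹ = if n = 0 then 1 else 0 := by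
  cases n with
  | zero => simp [phiC, poch]
  | succ n =>
    rw [if_neg (Nat.succ_ne_zero n)]
    set P : ℕ → F2 := fun i =>
      (-1 : F2) ^ (i : ℤ) * q ^ ((i : ℤ) * ((i : ℤ) - 1) / 2) * dz ((i : ℤ) - 1) *
        dz ((n : ℤ) + 1 - i) with hP
    have key : ∀ i ∈ Finset.range (n + 1 + 1),
        (1 - q ^ ((n : ℤ) + 1)) * (phiC i * (poch q (n + 1 - i))⁻¹) = P i - P (i + 1) := by
      intro i hi
      have hiN : i ≤ n + 1 := Nat.lt_succ_iff.mp (Finset.mem_range.mp hi)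
      have hsub : ((n + 1 - i : ℕ) : ℤ) = (n : ℤ) + 1 - i := by omega
      rw [show (poch q (n + 1 - i))⁻¹ = dz ((n : ℤ) + 1 - i) by rw [← hsub, dz_coe]]
      rw [phiC_eq]
      simp only [hP]
      push_cast
      obtain ⟨c, hc⟩ := Int.even_mul_succ_self ((i : ℤ) - 1)
      rw [sub_add_cancel] at hc
      have hc2 : (i : ℤ) * ((i : ℤ) - 1) = c + c := by linear_combination hc
      have h2 : ((i : ℤ) + 1) * (i : ℤ) = c + c + 2 * i := by linear_combination hc
      rw [show (i : ℤ) + 1 - 1 = (i : ℤ) by ring]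
      rw [hc2, h2]
      have e : (c + c + 2 * (i : ℤ)) / 2 = (c + c) / 2 + i := by omega
      rw [e, show q ^ ((c + c) / 2 + (i : ℤ)) = q ^ ((c + c) / 2) * q ^ (i : ℤ) from zpow_add₀ hq0 _ _]
      rw [show (-1 : F2) ^ ((i : ℤ) + 1) = -(-1 : F2) ^ (i : ℤ) by
        rw [zpow_add₀ hn0, zpow_one]; ring]
      rw [show (n : ℤ) + 1 - ((i : ℤ) + 1) = (n : ℤ) + 1 - i - 1 by ring]
      have hdz1 := dz_rel (i : ℤ)
      have hdz2 := dz_rel ((n : ℤ) + 1 - i)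
      have hsplit : q ^ ((n : ℤ) + 1 - i) * q ^ (i : ℤ) = q ^ ((n : ℤ) + 1) := by
        rw [← zpow_add₀ hq0]; congr 1; ring
      linear_combination ((-1 : F2) ^ (i : ℤ) * q ^ ((c + c) / 2)) *
        ((dz ((n : ℤ) + 1 - i)) * hdz1 + ((q ^ (i : ℤ)) * dz (i : ℤ)) * hdz2
          + ((dz (i : ℤ)) * dz ((n : ℤ) + 1 - i)) * hsplit)
    have tel : ∑ i ∈ Finset.range (n + 1 + 1), (P i - P (i + 1)) = P 0 - P (n + 1 + 1) :=
      Finset.sum_range_sub' P (n + 1 + 1)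
    have hP0 : P 0 = 0 := by
      simp only [hP, Nat.cast_zero]
      rw [show (0 : ℤ) - 1 = -1 by norm_num, dz_neg (show (-1 : ℤ) < 0 by norm_num)]
      ring
    have hPN : P (n + 1 + 1) = 0 := by
      simp only [hP]
      push_cast
      rw [show (n : ℤ) + 1 - ((n : ℤ) + 1 + 1) = -1 by ring,
        dz_neg (show (-1 : ℤ) < 0 by norm_num)]
      ring
    have hsum := Finset.sum_congr rfl key
    rw [← Finset.mul_sum, tel, hP0, hPN, sub_zero] at hsum
    exact (mul_eq_zero.mp hsum).resolve_left (one_sub_qpow_ne (show (n : ℤ) + 1 ≠ 0 by omega))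

lemma phiC_zero : phiC 0 = 1 := by simp [phiC, poch]

/-- explicit inverse of `phiL a` -/
def phiLinv (a : LS) : R2 := PowerSeries.mk fun m => HahnSeries.C ((poch q m)⁻¹) * a ^ m

set_option synthInstance.maxHeartbeats 1000000 in
lemma phiL_mul (a : LS) : phiL a * phiLinv a = 1 := by
  refine PowerSeries.ext fun n => ?_
  rw [PowerSeries.coeff_mul]
  simp only [phiL, phiLinv, PowerSeries.coeff_mk]
  rw [Finset.Nat.sum_antidiagonal_eq_sum_range_succ_mk]
  have step : ∀ i ∈ Finset.range (n + 1),
      (HahnSeries.C (phiC i) * a ^ i) * (HahnSeries.C ((poch q (n - i))⁻¹) * a ^ (n - i))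
        = HahnSeries.C (phiC i * (poch q (n - i))⁻¹) * a ^ n := by
    intro i hi
    have hle : i ≤ n := Nat.lt_succ_iff.mp (Finset.mem_range.mp hi)
    rw [mul_mul_mul_comm, ← map_mul, ← pow_add, Nat.add_sub_cancel' hle]
  rw [Finset.sum_congr rfl step, ← Finset.sum_mul,
    ← map_sum (HahnSeries.C : F2 →+* LS) _ _, euler_conv]
  rcases eq_or_ne n 0 with h | h
  · subst h; simp
  · rw [if_neg h, PowerSeries.coeff_one, if_neg h, map_zero, zero_mul]

lemma inv_phiL (a : LS) : (phiL a)⁻¹ = phiLinv a := by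
  have h0 : PowerSeries.constantCoeff (phiL a) ≠ 0 := by
    rw [← PowerSeries.coeff_zero_eq_constantCoeff_apply]
    simp [phiL, phiC_zero]
  have h := (PowerSeries.eq_inv_iff_mul_eq_one h0).mpr
    (by rw [mul_comm]; exact phiL_mul a)
  exact h.symm

lemma psE (c : F2) : (PowerSeries.mk fun n => phiC n * c ^ n : PowerSeries F2) *
    (PowerSeries.mk fun n => (poch q n)⁻¹ * c ^ n) = 1 := by
  refine PowerSeries.ext fun n => ?_
  rw [PowerSeries.coeff_mul]
  simp only [PowerSeries.coeff_mk]
  rw [Finset.Nat.sum_antidiagonal_eq_sum_range_succ_mk]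
  have step : ∀ i ∈ Finset.range (n + 1),
      (phiC i * c ^ i) * ((poch q (n - i))⁻¹ * c ^ (n - i))
        = (phiC i * (poch q (n - i))⁻¹) * c ^ n := by
    intro i hi
    have hle : i ≤ n := Nat.lt_succ_iff.mp (Finset.mem_range.mp hi)
    rw [mul_mul_mul_comm, ← pow_add, Nat.add_sub_cancel' hle]
  rw [Finset.sum_congr rfl step, ← Finset.sum_mul, euler_conv]
  rcases eq_or_ne n 0 with h | h
  · subst h; simp
  · rw [if_neg h, PowerSeries.coeff_one, if_neg h, zero_mul]

/-- explicit inverse of `phiX c` -/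
def phiXinv (c : F2) : R2 :=
  PowerSeries.C (HahnSeries.ofPowerSeries ℤ F2 (PowerSeries.mk fun n => (poch q n)⁻¹ * c ^ n))

lemma ofPS_coeff (f : PowerSeries F2) (z : ℤ) :
    (HahnSeries.ofPowerSeries ℤ F2 f).coeff z
      = if 0 ≤ z then PowerSeries.coeff z.toNat f else 0 := by
  rcases le_or_gt 0 z with h | h
  · rw [if_pos h]
    conv_lhs => rw [← Int.toNat_of_nonneg h]
    exact HahnSeries.ofPowerSeries_apply_coeff f z.toNat
  · rw [if_neg (not_le.mpr h), HahnSeries.ofPowerSeries_apply, HahnSeries.embDomain_notin_range]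
    rintro ⟨n, rfl⟩
    have h2 : ((n : ℕ) : ℤ) < 0 := h
    omega
lemma phiX_mul (c : F2) : phiX c * phiXinv c = 1 := by
  unfold phiX phiXinv
  rw [← map_mul, ← map_mul, psE, map_one, map_one]

lemma inv_phiX (c : F2) : (phiX c)⁻¹ = phiXinv c := by
  have h0 : PowerSeries.constantCoeff (phiX c) ≠ 0 := by
    rw [phiX, PowerSeries.constantCoeff_C]
    intro h
    have h1 := congrArg (fun g : LS => g.coeff 0) h
    simp only [HahnSeries.coeff_zero] at h1
    rw [show (0 : ℤ) = ((0 : ℕ) : ℤ) by norm_num, HahnSeries.ofPowerSeries_apply_coeff,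
      PowerSeries.coeff_mk] at h1
    simp [phiC_zero] at h1
  have h := (PowerSeries.eq_inv_iff_mul_eq_one h0).mpr
    (by rw [mul_comm]; exact phiX_mul c)
  exact h.symm

lemma diagX_coeff (c : ℤ → F2) (f : LS) (n : ℤ) : (diagX c f).coeff n = c n * f.coeff n := rfl

/-- `(-1)^z q^{z(z-1)/2}/(q;q)_z` extended by zero -/
def Fz (z : ℤ) : F2 := (-1 : F2) ^ z * q ^ (z * (z - 1) / 2) * dz z

lemma helperA (v : LS) (s : ℤ) (c : F2) (n : ℤ) :
    (v * HahnSeries.single s c).coeff n = v.coeff (n - s) * c := by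
  have h := HahnSeries.coeff_mul_single_add (r := c) (x := v) (a := n - s) (b := s)
  rw [sub_add_cancel] at h
  exact h

lemma coeff_sum {ι : Type*} (s : Finset ι) (f : ι → LS) (n : ℤ) :
    (∑ i ∈ s, f i).coeff n = ∑ i ∈ s, (f i).coeff n :=
  map_sum (HahnSeries.coeff.addMonoidHom n) f s

lemma helperC2 (c : F2) (z : ℤ) :
    (HahnSeries.ofPowerSeries ℤ F2 (PowerSeries.mk fun a => (poch q a)⁻¹ * c ^ a)).coeff z
      = dz z * c ^ z := by
  rw [ofPS_coeff]
  rcases le_or_gt 0 z with h | h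
  · rw [if_pos h, PowerSeries.coeff_mk, dz, if_pos h]
    congr 1
    conv_rhs => rw [← Int.toNat_of_nonneg h, zpow_natCast]
  · rw [if_neg (not_le.mpr h), dz_neg h, zero_mul]

lemma helperC3 (c : F2) (z : ℤ) :
    (HahnSeries.ofPowerSeries ℤ F2 (PowerSeries.mk fun a => phiC a * c ^ a)).coeff z
      = Fz z * c ^ z := by
  rw [ofPS_coeff]
  rcases le_or_gt 0 z with h | h
  · rw [if_pos h, PowerSeries.coeff_mk, phiC_eq, Fz]
    rw [Int.toNat_of_nonneg h]
    congr 1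
    conv_rhs => rw [← Int.toNat_of_nonneg h, zpow_natCast]
  · rw [if_neg (not_le.mpr h), Fz, dz_neg h]
    ring

lemma collapseL (A β c2 : F2) (s1 s2 : ℤ) (v : LS) :
    HahnSeries.C A * HahnSeries.single s1 β * (v * HahnSeries.single s2 c2)
      = v * HahnSeries.single (s1 + s2) (A * β * c2) := by
  rw [HahnSeries.C_apply, HahnSeries.single_mul_single, zero_add, mul_left_comm,
    HahnSeries.single_mul_single]

lemma collapseR (A B c2 : F2) (s1 s2 : ℤ) (β : F2) (v : LS) :
    HahnSeries.C A * (HahnSeries.C B * HahnSeries.single s1 β) * (v * HahnSeries.single s2 c2)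
      = v * HahnSeries.single (s1 + s2) (A * B * β * c2) := by
  rw [HahnSeries.C_apply, HahnSeries.C_apply, HahnSeries.single_mul_single, zero_add,
    HahnSeries.single_mul_single, zero_add, mul_left_comm, HahnSeries.single_mul_single,
    mul_assoc A B β]

lemma phiC_Fz (j : ℕ) : phiC j = Fz (j : ℤ) := by rw [phiC_eq]; rfl

lemma Gz_eq_Fz (z : ℤ) : Gz z = Fz z * q ^ z := by
  unfold Gz Fz
  obtain ⟨c, hc⟩ := Int.even_mul_succ_self (z - 1)
  rw [sub_add_cancel] at hc
  have h1 : z * (z + 1) = c + c + 2 * z := by linear_combination hc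
  have h2 : z * (z - 1) = c + c := by linear_combination hc
  rw [h1, h2]
  have e : (c + c + 2 * z) / 2 = (c + c) / 2 + z := by omega
  rw [e, zpow_add₀ hq0]
  ring

lemma final_scalar (m : ℕ) (n k : ℤ) :
    q ^ (n * (n + 1) / 2) *
        (dz (n - (-(m : ℤ) + k)) * (-t⁻¹) ^ (n - (-(m : ℤ) + k)) * ((poch q m)⁻¹ * (-q) ^ m * 1))
      = ∑ j ∈ Finset.range (m + 1),
          Fz (n - (-(j : ℤ) + k)) * (q ^ (1 + k) / t) ^ (n - (-(j : ℤ) + k)) *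
            ((poch q (m - j))⁻¹ * (q / t) ^ (m - j) * (phiC j * (q ^ (1 - k)) ^ j) *
              q ^ (k * (k + 1) / 2)) := by
  obtain ⟨ν, rfl⟩ : ∃ ν, n = ν + k := ⟨n - k, by ring⟩
  rw [show ν + k - (-(m : ℤ) + k) = ν + m by ring]
  have key : ∀ j ∈ Finset.range (m + 1),
      Fz (ν + k - (-(j : ℤ) + k)) * (q ^ (1 + k) / t) ^ (ν + k - (-(j : ℤ) + k)) *
          ((poch q (m - j))⁻¹ * (q / t) ^ (m - j) * (phiC j * (q ^ (1 - k)) ^ j) *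
            q ^ (k * (k + 1) / 2))
        = (t ^ (-(ν + (m : ℤ))) * q ^ (k * (k + 1) / 2 + k * ν)) *
            (Azz ((m : ℤ) - j) * Gz (j : ℤ) * Gz (ν + j)) := by
    intro j hj
    have hjm : j ≤ m := Nat.lt_succ_iff.mp (Finset.mem_range.mp hj)
    rw [show ν + k - (-(j : ℤ) + k) = ν + j by ring]
    rw [show ((poch q (m - j))⁻¹ : F2) = dz ((m : ℤ) - j) by
      rw [← dz_coe]; congr 1; omega]
    have hc : ((m - j : ℕ) : ℤ) = (m : ℤ) - j := by omega
    rw [show ((q / t) ^ (m - j) : F2) = q ^ ((m : ℤ) - j) * t ^ (-((m : ℤ) - j)) by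
      rw [← zpow_natCast (q / t) (m - j), hc, div_zpow, div_eq_mul_inv, ← zpow_neg]]
    rw [phiC_Fz]
    rw [show ((q ^ (1 - k) : F2)) ^ j = q ^ ((1 - k) * (j : ℤ)) by
      rw [← zpow_natCast (q ^ (1 - k)) j, ← zpow_mul]]
    rw [show ((q ^ (1 + k) / t : F2)) ^ (ν + j) = q ^ ((1 + k) * (ν + (j : ℤ))) * t ^ (-(ν + (j : ℤ))) by
      rw [div_zpow, ← zpow_mul, div_eq_mul_inv, ← zpow_neg]]
    rw [show Azz ((m : ℤ) - j) = q ^ ((m : ℤ) - j) * dz ((m : ℤ) - j) from rfl]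
    rw [Gz_eq_Fz ((j : ℤ)), Gz_eq_Fz (ν + j)]
    rw [show (1 + k) * (ν + (j : ℤ)) = ν + ((j : ℤ) + (k * ν + k * (j : ℤ))) by ring]
    rw [show -(ν + (j : ℤ)) = -ν + -(j : ℤ) by ring]
    rw [show -(ν + (m : ℤ)) = -ν + (-(j : ℤ) + -((m : ℤ) - j)) by ring]
    rw [show k * (k + 1) / 2 + k * ν = k * (k + 1) / 2 + k * ν from rfl]
    simp only [zpow_add₀ hq0, zpow_add₀ ht0]
    have hcan : q ^ (k * (j : ℤ)) * q ^ ((1 - k) * (j : ℤ)) = q ^ (j : ℤ) := by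
      rw [← zpow_add₀ hq0]; congr 1; ring
    linear_combination (t ^ (-ν) * t ^ (-(j : ℤ)) * t ^ (-((m : ℤ) - j)) * q ^ (k * (k + 1) / 2) *
      q ^ (k * ν) * q ^ ((m : ℤ) - j) * dz ((m : ℤ) - j) * Fz (j : ℤ) * Fz (ν + j) * q ^ ν *
      q ^ (j : ℤ)) * hcan
  rw [Finset.sum_congr rfl key, ← Finset.mul_sum]
  rw [show (∑ j ∈ Finset.range (m + 1), Azz ((m : ℤ) - j) * Gz (j : ℤ) * Gz (ν + j)) = rr m ν
    from rfl]
  rw [← V m ν, ll]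
  rw [show ((poch q m)⁻¹ : F2) = dz (m : ℤ) from (dz_coe m).symm]
  rw [show ((-q) ^ m : F2) = (-1 : F2) ^ ((m : ℤ)) * q ^ ((m : ℤ)) by
    rw [neg_pow, zpow_natCast, zpow_natCast]]
  rw [show ((-t⁻¹ : F2)) ^ (ν + (m : ℤ)) = (-1 : F2) ^ (ν + (m : ℤ)) * t ^ (-(ν + (m : ℤ))) by
    rw [show (-t⁻¹ : F2) = (-1) * t⁻¹ by ring, mul_zpow, inv_zpow, ← zpow_neg]]
  obtain ⟨c, hc⟩ := Int.even_mul_succ_self ν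
  obtain ⟨d, hd⟩ := Int.even_mul_succ_self k
  have h2 : (ν + k) * (ν + k + 1) = (c + c) + ((d + d) + 2 * (k * ν)) := by
    linear_combination hc + hd
  rw [h2, hc, hd]
  have e : ((c + c) + ((d + d) + 2 * (k * ν))) / 2 = (c + c) / 2 + ((d + d) / 2 + k * ν) := by
    omega
  rw [e]
  simp only [zpow_add₀ hq0]
  have hs : (-1 : F2) ^ (ν + (m : ℤ)) * (-1 : F2) ^ ((m : ℤ)) = (-1 : F2) ^ ν := by
    rw [← zpow_add₀ hn0, show ν + (m : ℤ) + (m : ℤ) = ν + 2 * m by ring, zpow_add₀ hn0, zpow_mul]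
    norm_num
  linear_combination (q ^ ((c + c) / 2) * q ^ ((d + d) / 2) * q ^ (k * ν) * t ^ (-(ν + (m : ℤ))) *
    q ^ ((m : ℤ)) * dz ((m : ℤ)) * dz (ν + (m : ℤ))) * hs

end Stmt7


/-- for every `k ∈ ℤ`,
`γ̂(φ(−x/t)⁻¹·φ(−qΛ/x)⁻¹·x^k) = φ(qΛ/t)⁻¹·φ(q^{1+k}x/t)·φ(q^{1−k}Λ/x)·q^{k(k+1)/2}·x^k`. -/
theorem stmt7 (k : ℤ) :
    gammaHat ((phiX (-t⁻¹))⁻¹ * (phiL (mono (-1) (-q)))⁻¹ * xpow k)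
      = (phiL (HahnSeries.C (q / t)))⁻¹ * phiX (q ^ (1 + k) / t) *
          phiL (mono (-1) (q ^ (1 - k))) * CF (q ^ (k * (k + 1) / 2)) * xpow k := by
  open Stmt7 in
  rw [inv_phiX, inv_phiL, inv_phiL]
  refine PowerSeries.ext fun m => ?_
  refine HahnSeries.coeff_inj.mp (funext fun n => ?_)
  -- LHS --
  rw [gammaHat, onX, PowerSeries.coeff_mk, Stmt7.diagX_coeff]
  have hL1 : phiXinv (-t⁻¹) * phiLinv (mono (-1) (-q)) * xpow k
      = phiLinv (mono (-1) (-q)) *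
          PowerSeries.C
            ((HahnSeries.ofPowerSeries ℤ F2 (PowerSeries.mk fun a => (poch q a)⁻¹ * (-t⁻¹) ^ a)) *
              HahnSeries.single k 1) := by
    rw [phiXinv, xpow, map_mul]; ring
  rw [hL1, PowerSeries.coeff_mul_C, phiLinv, PowerSeries.coeff_mk]
  rw [show (mono (-1) (-q)) ^ m = HahnSeries.single (-(m : ℤ)) ((-q) ^ m) by
    rw [mono, HahnSeries.single_pow]
    congr 1
    rw [nsmul_eq_mul]; push_cast; ring]
  rw [collapseL, helperA, helperC2]
  -- RHS --
  have hR1 : phiLinv (HahnSeries.C (q / t)) * phiX (q ^ (1 + k) / t) *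
        phiL (mono (-1) (q ^ (1 - k))) * CF (q ^ (k * (k + 1) / 2)) * xpow k
      = (phiLinv (HahnSeries.C (q / t)) * phiL (mono (-1) (q ^ (1 - k)))) *
          PowerSeries.C
            ((HahnSeries.ofPowerSeries ℤ F2
                (PowerSeries.mk fun a => phiC a * (q ^ (1 + k) / t) ^ a)) *
              HahnSeries.single k (q ^ (k * (k + 1) / 2))) := by
    have e1 : (PowerSeries.C)
          ((HahnSeries.ofPowerSeries ℤ F2
              (PowerSeries.mk fun a => phiC a * (q ^ (1 + k) / t) ^ a)) *
            HahnSeries.single k (q ^ (k * (k + 1) / 2)))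
        = PowerSeries.C (HahnSeries.ofPowerSeries ℤ F2
              (PowerSeries.mk fun a => phiC a * (q ^ (1 + k) / t) ^ a)) *
            PowerSeries.C (HahnSeries.single k (q ^ (k * (k + 1) / 2))) := map_mul _ _ _
    have e2 : (HahnSeries.single k (q ^ (k * (k + 1) / 2)) : LS)
        = HahnSeries.C (q ^ (k * (k + 1) / 2)) * HahnSeries.single k 1 := by
      rw [HahnSeries.C_apply, HahnSeries.single_mul_single, zero_add, mul_one]
    have e3 : PowerSeries.C (HahnSeries.C (q ^ (k * (k + 1) / 2)) * HahnSeries.single k 1)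
        = PowerSeries.C (HahnSeries.C (q ^ (k * (k + 1) / 2))) *
            PowerSeries.C (HahnSeries.single k 1) := map_mul _ _ _
    rw [phiX, CF, xpow, e1, e2, e3]
    ring
  rw [hR1, PowerSeries.coeff_mul_C, PowerSeries.coeff_mul,
    Finset.Nat.sum_antidiagonal_eq_sum_range_succ_mk]
  simp only [phiLinv, phiL, PowerSeries.coeff_mk]
  rw [Finset.sum_mul, coeff_sum]
  have hterm : ∀ i ∈ Finset.range (m + 1),
      (HahnSeries.C ((poch q i)⁻¹) * HahnSeries.C (q / t) ^ i *
          (HahnSeries.C (phiC (m - i)) * (mono (-1) (q ^ (1 - k))) ^ (m - i)) *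
            ((HahnSeries.ofPowerSeries ℤ F2
                (PowerSeries.mk fun a => phiC a * (q ^ (1 + k) / t) ^ a)) *
              HahnSeries.single k (q ^ (k * (k + 1) / 2)))).coeff n
        = Fz (n - (-((m - i : ℕ) : ℤ) + k)) * (q ^ (1 + k) / t) ^ (n - (-((m - i : ℕ) : ℤ) + k)) *
            ((poch q i)⁻¹ * (q / t) ^ i * (phiC (m - i) * (q ^ (1 - k)) ^ (m - i)) *
              q ^ (k * (k + 1) / 2)) := by
    intro i _
    rw [show (mono (-1) (q ^ (1 - k))) ^ (m - i)
        = HahnSeries.single (-((m - i : ℕ) : ℤ)) ((q ^ (1 - k)) ^ (m - i)) by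
      rw [mono, HahnSeries.single_pow]
      congr 1
      rw [nsmul_eq_mul]; push_cast; ring]
    rw [← map_pow, ← map_mul, collapseR, helperA, helperC3]
    ring
  rw [Finset.sum_congr rfl hterm]
  rw [← Finset.sum_range_reflect]
  have hterm2 : ∀ j ∈ Finset.range (m + 1),
      Fz (n - (-((m - (m + 1 - 1 - j) : ℕ) : ℤ) + k)) *
          (q ^ (1 + k) / t) ^ (n - (-((m - (m + 1 - 1 - j) : ℕ) : ℤ) + k)) *
            ((poch q (m + 1 - 1 - j))⁻¹ * (q / t) ^ (m + 1 - 1 - j) *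
              (phiC (m - (m + 1 - 1 - j)) * (q ^ (1 - k)) ^ (m - (m + 1 - 1 - j))) *
              q ^ (k * (k + 1) / 2))
        = Fz (n - (-(j : ℤ) + k)) * (q ^ (1 + k) / t) ^ (n - (-(j : ℤ) + k)) *
            ((poch q (m - j))⁻¹ * (q / t) ^ (m - j) * (phiC j * (q ^ (1 - k)) ^ j) *
              q ^ (k * (k + 1) / 2)) := by
    intro j hj
    have hjm : j ≤ m := Nat.lt_succ_iff.mp (Finset.mem_range.mp hj)
    have e1 : m + 1 - 1 - j = m - j := by omega
    have e2 : m - (m + 1 - 1 - j) = j := by omega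
    have e3 : ((m - (m + 1 - 1 - j) : ℕ) : ℤ) = (j : ℤ) := by omega
    rw [e3, e2, e1]
  rw [Finset.sum_congr rfl hterm2]
  exact final_scalar m n k
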